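/- arXiv:2209.01821 — 4 statements merged into one kernel-verified Lean document; each statement's English description precedes it below -/
import Mathlib

section
/- Let Hypothesis (L) hold and suppose $K(x,y)$ is $Y_+$-positive for all $x \in \Omega$ and $\mu$-almost all $y \in \Omega$. If every nonempty open subset of $\Omega$ has positive $\mu$-measure, and there exists $\bar x \in \Omega$ such that $K(\bar x, \cdot)$ is continuous on $\Omega$ and $K(\bar x, y)$ is $Y_+$-injective for $\mu$-almost all $y \in \Omega$, then the Fredholm operator $\mathscr{K}$ is strictly $C(\Omega)^d_+$-positive, i.e. $\mathscr{K}(C(\Omega)^d_+ \setminus \{0\}) \subseteq C(\Omega)^d_+ \setminus \{0\}$. -/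
/-!
An order cone is a closed salient convex cone, so by Farkas' lemma every point outside it is
separated from it by a functional nonnegative on the cone. Testing against such functionals,
integrals of cone-valued functions stay in the cone, which gives positivity of `𝒦`. If `𝒦 u`
vanished, then `y ↦ K(x̄, y) u(y)` would be a continuous cone-valued function with zero integral,
hence identically zero because `μ` charges every nonempty open set; `Y₊`-injectivity of
`K(x̄, y)` then forces `u = 0` almost everywhere, hence everywhere by continuity.
-/

open MeasureTheory

/-- An order cone in a real topological vector space. -/
def IsOrderCone {E : Type*} [AddCommGroup E] [Module ℝ E] [TopologicalSpace E]
    (C : Set E) : Prop :=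
  C.Nonempty ∧ IsClosed C ∧ Convex ℝ C ∧
    (∀ t : ℝ, 0 ≤ t → ∀ x ∈ C, t • x ∈ C) ∧ C ∩ (-C) = {0}

namespace IsOrderCone

variable {E : Type*} [AddCommGroup E] [Module ℝ E] [TopologicalSpace E] {C : Set E}

lemma zero_mem (hC : IsOrderCone C) : (0 : E) ∈ C :=
  (hC.2.2.2.2.symm ▸ rfl : (0 : E) ∈ C ∩ -C).1

lemma add_mem (hC : IsOrderCone C) {x y : E} (hx : x ∈ C) (hy : y ∈ C) : x + y ∈ C := by
  have hmid : (1 / 2 : ℝ) • x + (1 / 2 : ℝ) • y ∈ C :=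
    hC.2.2.1 hx hy (by norm_num) (by norm_num) (by norm_num)
  convert hC.2.2.2.1 2 (by norm_num) _ hmid using 1
  rw [smul_add, smul_smul, smul_smul]
  norm_num

def toProperCone (hC : IsOrderCone C) : ProperCone ℝ E where
  carrier := C
  add_mem' := hC.add_mem
  zero_mem' := hC.zero_mem
  smul_mem' c _ hx := hC.2.2.2.1 c c.2 _ hx
  isClosed' := hC.2.1

lemma salient_toProperCone (hC : IsOrderCone C) :
    ((hC.toProperCone : PointedCone ℝ E) : ConvexCone ℝ E).Salient :=
  (PointedCone.salient_iff_inter_neg_eq_singleton _).2 hC.2.2.2.2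

end IsOrderCone

namespace ProperCone

section Separation

variable {E : Type*} [AddCommGroup E] [TopologicalSpace E] [IsTopologicalAddGroup E]
  [Module ℝ E] [ContinuousSMul ℝ E] [LocallyConvexSpace ℝ E]

lemma exists_dual_pos_of_salient (C : ProperCone ℝ E)
    (hC : ((C : PointedCone ℝ E) : ConvexCone ℝ E).Salient) {x : E} (hx : x ∈ C) (hx0 : x ≠ 0) :
    ∃ f : StrongDual ℝ E, (∀ y ∈ C, 0 ≤ f y) ∧ 0 < f x := by
  obtain ⟨f, hfC, hf⟩ := C.hyperplane_separation_point (hC x hx hx0)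
  exact ⟨f, hfC, by simpa using hf⟩

end Separation

section Integral

variable {Ω E : Type*} [MeasurableSpace Ω] {μ : Measure Ω}
  [NormedAddCommGroup E] [NormedSpace ℝ E] [CompleteSpace E]

lemma integral_mem (C : ProperCone ℝ E) {f : Ω → E} (hf : ∀ᵐ y ∂μ, f y ∈ C) :
    ∫ y, f y ∂μ ∈ C := by
  by_cases hfi : Integrable f μ
  swap
  · rw [integral_undef hfi]
    exact C.zero_mem
  by_contra hnot
  obtain ⟨φ, hφC, hφ⟩ := C.hyperplane_separation_point hnot
  have : 0 ≤ ∫ y, φ (f y) ∂μ := integral_nonneg_of_ae (hf.mono fun y hy => hφC _ hy)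
  rw [φ.integral_comp_comm hfi] at this
  linarith

/-- Testing against a functional that is positive at `g y` turns `∫ g = 0` into the vanishing
of a continuous nonnegative real function, which an open-positive measure forbids. -/
lemma eq_zero_of_integral_eq_zero [TopologicalSpace Ω] [μ.IsOpenPosMeasure]
    (C : ProperCone ℝ E) (hC : ((C : PointedCone ℝ E) : ConvexCone ℝ E).Salient)
    {g : Ω → E} (hg : Continuous g) (hgi : Integrable g μ) (hgC : ∀ᵐ y ∂μ, g y ∈ C)
    (h0 : ∫ y, g y ∂μ = 0) : g = 0 := by
  have hg_mem : ∀ y, g y ∈ C := by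
    have hclosed : IsClosed {y | g y ∈ C} := C.isClosed.preimage hg
    simpa [hclosed.closure_eq, Set.eq_univ_iff_forall] using (Measure.dense_of_ae hgC).closure_eq
  funext y
  by_contra hy
  obtain ⟨φ, hφC, hφ⟩ := C.exists_dual_pos_of_salient hC (hg_mem y) hy
  have hpos : 0 < ∫ z, φ (g z) ∂μ :=
    integral_pos_of_integrable_nonneg_nonzero (φ.continuous.comp hg) (φ.integrable_comp hgi)
      (fun z => hφC _ (hg_mem z)) hφ.ne'
  rw [φ.integral_comp_comm hgi, h0, map_zero] at hpos
  exact lt_irrefl _ hpos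

end Integral

end ProperCone

theorem stmt3_general {d : ℕ} {Ω : Type*} [MetricSpace Ω] [CompactSpace Ω]
    [MeasurableSpace Ω] [OpensMeasurableSpace Ω]
    (μ : Measure Ω)
    (Y : Set (EuclideanSpace ℝ (Fin d))) (hY : IsOrderCone Y)
    (K : Ω → Ω → EuclideanSpace ℝ (Fin d) →L[ℝ] EuclideanSpace ℝ (Fin d))
    (hKint : ∀ x, Integrable (K x) μ)
    (hKpos : ∀ x, ∀ᵐ y ∂μ, ∀ v ∈ Y, K x y v ∈ Y)
    (hopen : ∀ U : Set Ω, IsOpen U → U.Nonempty → 0 < μ U)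
    (hinj : ∃ xb : Ω, Continuous (K xb) ∧
      ∀ᵐ y ∂μ, ∀ v ∈ Y, K xb y v = 0 → v = 0)
    (u : C(Ω, EuclideanSpace ℝ (Fin d))) (hu : ∀ x, u x ∈ Y) (hune : u ≠ 0) :
    (∀ x, (∫ y, K x y (u y) ∂μ) ∈ Y) ∧
      (fun x => ∫ y, K x y (u y) ∂μ) ≠ 0 := by
  have : μ.IsOpenPosMeasure := ⟨fun U hU hne => (hopen U hU hne).ne'⟩
  have hKuY : ∀ x, ∀ᵐ y ∂μ, K x y (u y) ∈ Y := fun x => (hKpos x).mono fun y h => h _ (hu y)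
  refine ⟨fun x => hY.toProperCone.integral_mem (hKuY x), fun hzero => hune ?_⟩
  obtain ⟨xb, hKc, hKinj⟩ := hinj
  have hKu_zero : (fun y => K xb y (u y)) = 0 :=
    hY.toProperCone.eq_zero_of_integral_eq_zero hY.salient_toProperCone
      (hKc.clm_apply u.continuous)
      ((ContinuousLinearMap.id ℝ _).integrable_of_bilin_of_bdd_right ‖u‖ (hKint xb)
        u.continuous.aestronglyMeasurable (ae_of_all _ u.norm_coe_le_norm))
      (hKuY xb) (congrFun hzero xb)
  have hu_ae : ⇑u =ᵐ[μ] 0 := hKinj.mono fun y h => h _ (hu y) (congrFun hKu_zero y)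
  exact DFunLike.coe_injective ((u.continuous.ae_eq_iff_eq μ continuous_const).1 hu_ae)

/-- Under Hypothesis (L) and `Y₊`-positivity of the kernel, if nonempty open subsets of
`Ω` have positive measure and there is `xb ∈ Ω` such that `K(xb,·)` is continuous and
`K(xb,y)` is `Y₊`-injective for `μ`-a.a. `y`, then the Fredholm operator `𝒦` is strictly
`C(Ω)^d₊`-positive. -/
theorem stmt3 {d : ℕ} {Ω : Type*} [MetricSpace Ω] [CompactSpace Ω]
    [MeasurableSpace Ω] [OpensMeasurableSpace Ω]
    (μ : Measure Ω) [IsFiniteMeasure μ]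
    (Y : Set (EuclideanSpace ℝ (Fin d))) (hY : IsOrderCone Y)
    (K : Ω → Ω → EuclideanSpace ℝ (Fin d) →L[ℝ] EuclideanSpace ℝ (Fin d))
    (hKmeas : ∀ x, AEStronglyMeasurable (K x) μ)
    (hKint : ∀ x, Integrable (K x) μ)
    (hKbdd : ∃ M : ℝ, ∀ x, (∫ y, ‖K x y‖ ∂μ) ≤ M)
    (hKcont : ∀ x₀, Filter.Tendsto (fun x => ∫ y, ‖K x y - K x₀ y‖ ∂μ)
      (nhds x₀) (nhds 0))
    (hKpos : ∀ x, ∀ᵐ y ∂μ, ∀ v ∈ Y, K x y v ∈ Y)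
    (hopen : ∀ U : Set Ω, IsOpen U → U.Nonempty → 0 < μ U)
    (hinj : ∃ xb : Ω, Continuous (K xb) ∧
      ∀ᵐ y ∂μ, ∀ v ∈ Y, K xb y v = 0 → v = 0)
    (u : C(Ω, EuclideanSpace ℝ (Fin d))) (hu : ∀ x, u x ∈ Y) (hune : u ≠ 0) :
    (∀ x, (∫ y, K x y (u y) ∂μ) ∈ Y) ∧
      (fun x => ∫ y, K x y (u y) ∂μ) ≠ 0 :=
  stmt3_general μ Y hY K hKint hKpos hopen hinj u hu hune
end

section
/- Let Hypothesis (L) hold and suppose $K(x,y)$ is $Y_+$-positive for all $x \in \Omega$ and $\mu$-almost all $y \in \Omega$. If $\mu(\Omega) > 0$, $Y_+$ is solid, and $K(x,y)Y_+^{\circ} \subseteq Y_+^{\circ}$ for all $x \in \Omega$ and $\mu$-almost all $y \in \Omega$, then the Fredholm operator $\mathscr{K}$ maps the interior of $C(\Omega)^d_+$ into the interior of $C(\Omega)^d_+$. -/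
/-!
A function in the interior of `C(Ω)^d₊` takes all its values in `Y₊°`, and conversely, by
compactness of `Ω`. For such `u` the integrand `f = K(x,·) u(·)` lies a.e. in the open convex
set `Y₊°`, hence so does its average: a functional `ℓ` separating the average from `Y₊°` would
give `ℓ ∘ f < ⨍ ℓ ∘ f` almost everywhere. Scaling by `μ(Ω) > 0` keeps the average in the cone
`Y₊°`, and Hypothesis (L) makes `𝒦u` continuous.
-/

open MeasureTheory

open Set Filter Topology
open scoped Pointwise

section Cone

variable {E : Type*} [NormedAddCommGroup E] [NormedSpace ℝ E]

theorem smul_mem_interior_of_pos_smul_mem {Y : Set E}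
    (hY : ∀ t : ℝ, 0 < t → ∀ x ∈ Y, t • x ∈ Y) {t : ℝ} (ht : 0 < t) {a : E}
    (ha : a ∈ interior Y) : t • a ∈ interior Y := by
  have hsub : t • Y ⊆ Y := by
    rintro _ ⟨x, hx, rfl⟩
    exact hY t ht x hx
  exact interior_mono hsub (interior_smul₀ ht.ne' Y ▸ smul_mem_smul_set ha)

variable [CompleteSpace E] {α : Type*} [MeasurableSpace α] {μ : Measure α}

theorem Convex.average_mem_of_isOpen [IsFiniteMeasure μ] [NeZero μ] {s : Set E}
    (hs : Convex ℝ s) (hso : IsOpen s) {f : α → E} (hfs : ∀ᵐ x ∂μ, f x ∈ s)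
    (hfi : Integrable f μ) : ⨍ x, f x ∂μ ∈ s := by
  by_contra hmem
  obtain ⟨ℓ, hℓ⟩ := geometric_hahn_banach_open_point hs hso hmem
  have hℓavg : ⨍ x, ℓ (f x) ∂μ = ℓ (⨍ x, f x ∂μ) := by
    rw [average_eq, average_eq, map_smul, ℓ.integral_comp_comm hfi]
  obtain ⟨x, hxs, hx⟩ := exists_notMem_null_average_le (NeZero.ne μ) (ℓ.integrable_comp hfi)
    (ae_iff.mp hfs)
  rw [hℓavg] at hx
  exact (hℓ _ (not_not.mp hxs)).not_ge hx

theorem Convex.integral_mem_interior_of_pos_smul_mem [IsFiniteMeasure μ] [NeZero μ]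
    {Y : Set E} (hconv : Convex ℝ Y) (hY : ∀ t : ℝ, 0 < t → ∀ x ∈ Y, t • x ∈ Y) {f : α → E}
    (hf : ∀ᵐ x ∂μ, f x ∈ interior Y) (hfi : Integrable f μ) :
    ∫ x, f x ∂μ ∈ interior Y := by
  rw [← measure_smul_average]
  exact smul_mem_interior_of_pos_smul_mem hY measureReal_univ_pos
    (hconv.interior.average_mem_of_isOpen isOpen_interior hf hfi)

end Cone

namespace ContinuousMap

variable {X E : Type*} [TopologicalSpace X] [TopologicalSpace E] {Y : Set E} {w : C(X, E)}

theorem apply_mem_interior_of_mem_interior_setOf [AddCommGroup E] [IsTopologicalAddGroup E]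
    (hw : w ∈ interior {w : C(X, E) | ∀ x, w x ∈ Y}) (x : X) : w x ∈ interior Y := by
  let shift : E → C(X, E) := fun z => w + const X (z - w x)
  have hshift : Continuous shift :=
    continuous_const.add (continuous_const'.comp (continuous_id.sub continuous_const))
  have hshift_x : shift (w x) = w := by
    ext
    simp [shift]
  have hnhds : shift ⁻¹' {w : C(X, E) | ∀ x, w x ∈ Y} ∈ 𝓝 (w x) :=
    hshift.continuousAt.preimage_mem_nhds <| by
      rw [hshift_x]
      exact mem_interior_iff_mem_nhds.mp hw
  exact mem_interior_iff_mem_nhds.mpr <|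
    mem_of_superset hnhds fun z hz => by simpa [shift] using hz x

theorem mem_interior_setOf_of_forall_apply_mem_interior [CompactSpace X]
    (hw : ∀ x, w x ∈ interior Y) : w ∈ interior {w : C(X, E) | ∀ x, w x ∈ Y} :=
  interior_maximal (t := {v : C(X, E) | MapsTo v univ (interior Y)})
    (fun _ hv x => interior_subset (hv (mem_univ x)))
    (isOpen_setOfPred_mapsTo isCompact_univ isOpen_interior) fun x _ => hw x

end ContinuousMap

section Fredholm

variable {X α E F : Type*} [TopologicalSpace X] [MeasurableSpace α] {μ : Measure α}
  [NormedAddCommGroup E] [NormedSpace ℝ E] [NormedAddCommGroup F] [NormedSpace ℝ F]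

theorem MeasureTheory.Integrable.apply_of_norm_le {K : α → E →L[ℝ] F} (hK : Integrable K μ)
    {u : α → E} (hu : AEStronglyMeasurable u μ) {C : ℝ} (huC : ∀ y, ‖u y‖ ≤ C) :
    Integrable (fun y => K y (u y)) μ :=
  hK.norm.mul_const C |>.mono' (isBoundedBilinearMap_apply.continuous.comp_aestronglyMeasurable
    (hK.aestronglyMeasurable.prodMk hu)) (.of_forall fun y => (K y).le_opNorm_of_le (huC y))

theorem continuous_integral_apply_of_tendsto_integral_norm_sub [CompleteSpace F]
    {K : X → α → E →L[ℝ] F} (hK : ∀ x, Integrable (K x) μ)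
    (hKcont : ∀ x₀, Tendsto (fun x => ∫ y, ‖K x y - K x₀ y‖ ∂μ) (𝓝 x₀) (𝓝 0))
    {u : α → E} (hu : AEStronglyMeasurable u μ) {C : ℝ} (huC : ∀ y, ‖u y‖ ≤ C) :
    Continuous fun x => ∫ y, K x y (u y) ∂μ := by
  refine continuous_iff_continuousAt.mpr fun x₀ => tendsto_iff_norm_sub_tendsto_zero.mpr ?_
  have hbound : ∀ x, ‖∫ y, K x y (u y) ∂μ - ∫ y, K x₀ y (u y) ∂μ‖
      ≤ (∫ y, ‖K x y - K x₀ y‖ ∂μ) * C := fun x => by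
    rw [← integral_sub ((hK x).apply_of_norm_le hu huC) ((hK x₀).apply_of_norm_le hu huC),
      ← integral_mul_const]
    exact norm_integral_le_of_norm_le (((hK x).sub (hK x₀)).norm.mul_const C)
      (.of_forall fun y => (K x y - K x₀ y).le_opNorm_of_le (huC y))
  exact squeeze_zero (fun x => norm_nonneg _) hbound (by simpa using (hKcont x₀).mul_const C)

end Fredholm

theorem stmt5_general {d : ℕ} {Ω : Type*} [MetricSpace Ω] [CompactSpace Ω]
    [MeasurableSpace Ω] [OpensMeasurableSpace Ω]
    (μ : Measure Ω) [IsFiniteMeasure μ] (hμ : 0 < μ Set.univ)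
    (Y : Set (EuclideanSpace ℝ (Fin d))) (hY : IsOrderCone Y)
    (K : Ω → Ω → EuclideanSpace ℝ (Fin d) →L[ℝ] EuclideanSpace ℝ (Fin d))
    (hKint : ∀ x, Integrable (K x) μ)
    (hKcont : ∀ x₀, Filter.Tendsto (fun x => ∫ y, ‖K x y - K x₀ y‖ ∂μ)
      (nhds x₀) (nhds 0))
    (hKintr : ∀ x, ∀ᵐ y ∂μ, ∀ v ∈ interior Y, K x y v ∈ interior Y)
    (u : C(Ω, EuclideanSpace ℝ (Fin d)))
    (hu : u ∈ interior {w : C(Ω, EuclideanSpace ℝ (Fin d)) | ∀ x, w x ∈ Y}) :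
    ∃ v : C(Ω, EuclideanSpace ℝ (Fin d)),
      (∀ x, v x = ∫ y, K x y (u y) ∂μ) ∧
      v ∈ interior {w : C(Ω, EuclideanSpace ℝ (Fin d)) | ∀ x, w x ∈ Y} := by
  obtain ⟨-, -, hconv, hcone, -⟩ := hY
  have : NeZero μ := ⟨Measure.measure_univ_pos.mp hμ⟩
  have hu_meas := u.continuous.aestronglyMeasurable (μ := μ)
  have hu_int := ContinuousMap.apply_mem_interior_of_mem_interior_setOf hu
  let v : C(Ω, EuclideanSpace ℝ (Fin d)) :=
    ⟨_, continuous_integral_apply_of_tendsto_integral_norm_sub hKint hKcont hu_meas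
      u.norm_coe_le_norm⟩
  refine ⟨v, fun _ => rfl, ContinuousMap.mem_interior_setOf_of_forall_apply_mem_interior
    fun x => ?_⟩
  exact hconv.integral_mem_interior_of_pos_smul_mem (fun t ht => hcone t ht.le)
    ((hKintr x).mono fun y hy => hy _ (hu_int y))
    ((hKint x).apply_of_norm_le hu_meas u.norm_coe_le_norm)

/-- Under Hypothesis (L) and `Y₊`-positivity of the kernel, if `μ(Ω) > 0`, `Y₊` is solid
and `K(x,y) Y₊° ⊆ Y₊°` for all `x` and `μ`-a.a. `y`, then the Fredholm operator `𝒦`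
maps the interior of `C(Ω)^d₊` into the interior of `C(Ω)^d₊`. -/
theorem stmt5 {d : ℕ} {Ω : Type*} [MetricSpace Ω] [CompactSpace Ω]
    [MeasurableSpace Ω] [OpensMeasurableSpace Ω]
    (μ : Measure Ω) [IsFiniteMeasure μ] (hμ : 0 < μ Set.univ)
    (Y : Set (EuclideanSpace ℝ (Fin d))) (hY : IsOrderCone Y)
    (hsolid : (interior Y).Nonempty)
    (K : Ω → Ω → EuclideanSpace ℝ (Fin d) →L[ℝ] EuclideanSpace ℝ (Fin d))
    (hKmeas : ∀ x, AEStronglyMeasurable (K x) μ)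
    (hKint : ∀ x, Integrable (K x) μ)
    (hKbdd : ∃ M : ℝ, ∀ x, (∫ y, ‖K x y‖ ∂μ) ≤ M)
    (hKcont : ∀ x₀, Filter.Tendsto (fun x => ∫ y, ‖K x y - K x₀ y‖ ∂μ)
      (nhds x₀) (nhds 0))
    (hKpos : ∀ x, ∀ᵐ y ∂μ, ∀ v ∈ Y, K x y v ∈ Y)
    (hKintr : ∀ x, ∀ᵐ y ∂μ, ∀ v ∈ interior Y, K x y v ∈ interior Y)
    (u : C(Ω, EuclideanSpace ℝ (Fin d)))
    (hu : u ∈ interior {w : C(Ω, EuclideanSpace ℝ (Fin d)) | ∀ x, w x ∈ Y}) :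
    ∃ v : C(Ω, EuclideanSpace ℝ (Fin d)),
      (∀ x, v x = ∫ y, K x y (u y) ∂μ) ∧
      v ∈ interior {w : C(Ω, EuclideanSpace ℝ (Fin d)) | ∀ x, w x ∈ Y} :=
  stmt5_general μ hμ Y hY K hKint hKcont hKintr u hu
end

section
/- Let Hypothesis (L²) hold with $Y_+ \subset \mathbb{R}^d$ an orthant. If $K(x,y)$ is $Y_+$-positive and $Y_+$-injective (equivalently, strictly $Y_+$-positive) for $\mu$-almost all $x, y \in \Omega$, then the Fredholm operator $\mathscr{K} \in L(L^2(\Omega)^d)$ is strictly $L^2(\Omega)^d_+$-positive, i.e. $\mathscr{K}(L^2(\Omega)^d_+ \setminus \{0\}) \subseteq L^2(\Omega)^d_+ \setminus \{0\}$. -/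
/-!
For a.e. `x` the row `y ↦ K x y` is in `L²`, so by Cauchy–Schwarz `y ↦ K x y (u y)` is integrable
with values in the orthant. Each sign-weighted coordinate `ς i * (·) i` is a linear functional that
is nonnegative on the orthant, so the integral `(𝒦 u)(x)` lies in the orthant, and if it vanishes
then `K x y (u y) = 0` for a.e. `y`. If `𝒦 u = 0` a.e., choose one such `x`; `Y₊`-injectivity of
`K x y` then forces `u = 0` a.e.
-/

open MeasureTheory
open scoped ENNReal

section
variable {α β E : Type*} [MeasurableSpace α] [MeasurableSpace β] {μ : Measure α} {ν : Measure β}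
  [NormedAddCommGroup E]

theorem ae_memLp_of_lintegral_lintegral_lt_top [SFinite ν] {F : α → β → E} {p : ℝ≥0∞}
    (hF : AEStronglyMeasurable (Function.uncurry F) (μ.prod ν)) (hp0 : p ≠ 0) (hptop : p ≠ ∞)
    (hFp : ∫⁻ x, ∫⁻ y, ‖F x y‖ₑ ^ p.toReal ∂ν ∂μ < ∞) :
    ∀ᵐ x ∂μ, MemLp (F x) p ν := by
  have hrow : ∀ᵐ x ∂μ, ∫⁻ y, ‖F x y‖ₑ ^ p.toReal ∂ν < ∞ :=
    ae_lt_top' (hF.enorm.pow_const _).lintegral_prod_right' hFp.ne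
  filter_upwards [hrow, hF.prodMk_left] with x hx hxm
  exact ⟨hxm, (eLpNorm_lt_top_iff_lintegral_rpow_enorm_lt_top hp0 hptop).2 hx⟩
end

section
variable {α E F : Type*} [MeasurableSpace α] {μ : Measure α}
  [NormedAddCommGroup E] [NormedSpace ℝ E] [NormedAddCommGroup F] [NormedSpace ℝ F]

theorem MeasureTheory.MemLp.integrable_clm_apply {K : α → E →L[ℝ] F} {u : α → E}
    (hK : MemLp K 2 μ) (hu : MemLp u 2 μ) : Integrable (fun y => K y (u y)) μ := by
  rw [← memLp_one_iff_integrable]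
  exact hK.of_bilin (r := 1) (fun L v => L v) 1 hu
    (isBoundedBilinearMap_apply.continuous.comp_aestronglyMeasurable (hK.1.prodMk hu.1))
    (.of_forall fun y => by simpa using (K y).le_opNNNorm (u y))
end

section
variable {α E : Type*} [MeasurableSpace α] {μ : Measure α}
  [NormedAddCommGroup E] [NormedSpace ℝ E] [CompleteSpace E] {f : α → E} (ℓ : E →L[ℝ] ℝ)

theorem ContinuousLinearMap.integral_nonneg_of_ae (hf : Integrable f μ)
    (h : ∀ᵐ y ∂μ, 0 ≤ ℓ (f y)) : 0 ≤ ℓ (∫ y, f y ∂μ) := by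
  rw [← ℓ.integral_comp_comm hf]
  exact MeasureTheory.integral_nonneg_of_ae h

theorem ContinuousLinearMap.ae_eq_zero_of_integral_eq_zero (hf : Integrable f μ)
    (h : ∀ᵐ y ∂μ, 0 ≤ ℓ (f y)) (h0 : ℓ (∫ y, f y ∂μ) = 0) : ∀ᵐ y ∂μ, ℓ (f y) = 0 := by
  rw [← ℓ.integral_comp_comm hf] at h0
  exact (integral_eq_zero_iff_of_nonneg_ae h (ℓ.integrable_comp hf)).1 h0
end

def orthant {d : ℕ} (ς : Fin d → ℝ) : Set (EuclideanSpace ℝ (Fin d)) :=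
  {y | ∀ i, 0 ≤ ς i * y i}

section
variable {α : Type*} [MeasurableSpace α] {μ : Measure α} {d : ℕ} {ς : Fin d → ℝ}
  {f : α → EuclideanSpace ℝ (Fin d)}

theorem integral_mem_orthant (hf : Integrable f μ) (h : ∀ᵐ y ∂μ, f y ∈ orthant ς) :
    ∫ y, f y ∂μ ∈ orthant ς := fun i =>
  (ς i • EuclideanSpace.proj i).integral_nonneg_of_ae hf (h.mono fun _ hy => hy i)

theorem ae_eq_zero_of_integral_eq_zero_of_mem_orthant (hς : ∀ i, ς i ≠ 0)
    (hf : Integrable f μ) (h : ∀ᵐ y ∂μ, f y ∈ orthant ς) (h0 : ∫ y, f y ∂μ = 0) :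
    f =ᵐ[μ] 0 := by
  have hcoord : ∀ i, ∀ᵐ y ∂μ, ς i * f y i = 0 := fun i =>
    (ς i • EuclideanSpace.proj i).ae_eq_zero_of_integral_eq_zero hf (h.mono fun _ hy => hy i)
      (by simp [h0])
  filter_upwards [ae_all_iff.2 hcoord] with y hy
  ext i
  simpa [hς i] using hy i
end

theorem stmt9_general {d : ℕ} {Ω : Type*} [MeasurableSpace Ω]
    (μ : Measure Ω) [IsFiniteMeasure μ]
    (ς : Fin d → ℝ) (hς : ∀ i, ς i = 1 ∨ ς i = -1)
    (Y : Set (EuclideanSpace ℝ (Fin d)))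
    (hY : Y = {y : EuclideanSpace ℝ (Fin d) | ∀ i, 0 ≤ ς i * y i})
    (K : Ω → Ω → EuclideanSpace ℝ (Fin d) →L[ℝ] EuclideanSpace ℝ (Fin d))
    (hKmeas : AEStronglyMeasurable (fun q : Ω × Ω => K q.1 q.2) (μ.prod μ))
    (hKL2 : (∫⁻ x, ∫⁻ y, (‖K x y‖₊ : ℝ≥0∞) ^ 2 ∂μ ∂μ) < ∞)
    (hKpos : ∀ᵐ q : Ω × Ω ∂μ.prod μ, ∀ v ∈ Y, K q.1 q.2 v ∈ Y)
    (hKinj : ∀ᵐ q : Ω × Ω ∂μ.prod μ, ∀ v ∈ Y, K q.1 q.2 v = 0 → v = 0)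
    (u : Ω → EuclideanSpace ℝ (Fin d)) (hu : MemLp u 2 μ)
    (hupos : ∀ᵐ x ∂μ, u x ∈ Y) (hune : ¬ (u =ᵐ[μ] 0)) :
    (∀ᵐ x ∂μ, (∫ y, K x y (u y) ∂μ) ∈ Y) ∧
      ¬ ((fun x => ∫ y, K x y (u y) ∂μ) =ᵐ[μ] 0) := by
  change Y = orthant ς at hY
  subst hY
  have hrow : ∀ᵐ x ∂μ, MemLp (K x) 2 μ :=
    ae_memLp_of_lintegral_lintegral_lt_top hKmeas two_ne_zero ENNReal.ofNat_ne_top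
      (by simpa [enorm_eq_nnnorm] using hKL2)
  have hint : ∀ᵐ x ∂μ, Integrable (fun y => K x y (u y)) μ :=
    hrow.mono fun x hx => hx.integrable_clm_apply hu
  have hpos : ∀ᵐ x ∂μ, ∀ᵐ y ∂μ, K x y (u y) ∈ orthant ς := by
    filter_upwards [Measure.ae_ae_of_ae_prod hKpos] with x hx
    filter_upwards [hx, hupos] with y hy hyu using hy _ hyu
  have hinj : ∀ᵐ x ∂μ, ∀ᵐ y ∂μ, K x y (u y) = 0 → u y = 0 := by
    filter_upwards [Measure.ae_ae_of_ae_prod hKinj] with x hx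
    filter_upwards [hx, hupos] with y hy hyu using hy _ hyu
  refine ⟨?_, fun hzero => hune ?_⟩
  · filter_upwards [hint, hpos] with x hx hxpos using integral_mem_orthant hx hxpos
  · have : (ae μ).NeBot := ⟨fun h => hune (by simp [Filter.EventuallyEq, h])⟩
    obtain ⟨x, hx, hxpos, hxinj, hx0⟩ := (hint.and (hpos.and (hinj.and hzero))).exists
    have hς0 : ∀ i, ς i ≠ 0 := fun i => by rcases hς i with h | h <;> simp [h]
    filter_upwards [ae_eq_zero_of_integral_eq_zero_of_mem_orthant hς0 hx hxpos hx0, hxinj]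
      with y hy0 hyinj using hyinj hy0

/-- Under Hypothesis (L²) with an orthant `Y₊ ⊂ ℝ^d`, if `K(x,y)` is strictly
`Y₊`-positive (i.e. `Y₊`-positive and `Y₊`-injective) for `μ`-a.a. `x, y`, then the
Fredholm operator `𝒦` on `L²(Ω)^d` is strictly `L²(Ω)^d₊`-positive. -/
theorem stmt9 {d : ℕ} {Ω : Type*} [MeasurableSpace Ω]
    (μ : Measure Ω) [IsFiniteMeasure μ] (hμ : 0 < μ Set.univ)
    (ς : Fin d → ℝ) (hς : ∀ i, ς i = 1 ∨ ς i = -1)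
    (Y : Set (EuclideanSpace ℝ (Fin d)))
    (hY : Y = {y : EuclideanSpace ℝ (Fin d) | ∀ i, 0 ≤ ς i * y i})
    (K : Ω → Ω → EuclideanSpace ℝ (Fin d) →L[ℝ] EuclideanSpace ℝ (Fin d))
    (hKmeas : AEStronglyMeasurable (fun q : Ω × Ω => K q.1 q.2) (μ.prod μ))
    (hKL2 : (∫⁻ x, ∫⁻ y, (‖K x y‖₊ : ℝ≥0∞) ^ 2 ∂μ ∂μ) < ∞)
    (hKpos : ∀ᵐ q : Ω × Ω ∂μ.prod μ, ∀ v ∈ Y, K q.1 q.2 v ∈ Y)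
    (hKinj : ∀ᵐ q : Ω × Ω ∂μ.prod μ, ∀ v ∈ Y, K q.1 q.2 v = 0 → v = 0)
    (u : Ω → EuclideanSpace ℝ (Fin d)) (hu : MemLp u 2 μ)
    (hupos : ∀ᵐ x ∂μ, u x ∈ Y) (hune : ¬ (u =ᵐ[μ] 0)) :
    (∀ᵐ x ∂μ, (∫ y, K x y (u y) ∂μ) ∈ Y) ∧
      ¬ ((fun x => ∫ y, K x y (u y) ∂μ) =ᵐ[μ] 0) :=
  stmt9_general μ ς hς Y hY K hKmeas hKL2 hKpos hKinj u hu hupos hune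
end

section
/- Let $a = x_0 < x_1 < \dots < x_n = b$ be a grid with $h_i := x_{i+1}-x_i$, and define $\Pi_n : C[a,b]^d \to C[a,b]^d$ piecewise by $(\Pi_n u)(x) := \big(1 - 3(\tfrac{x-x_i}{h_i})^2 + 2(\tfrac{x-x_i}{h_i})^3\big)u(x_i) + \big(3(\tfrac{x-x_i}{h_i})^2 - 2(\tfrac{x-x_i}{h_i})^3\big)u(x_{i+1})$ for $x \in [x_i,x_{i+1}]$, $0 \le i < n$. Then $\Pi_n$ is a well-defined bounded linear map whose values are continuously differentiable (cubic $C^1$-splines), $\Pi_n$ is $C[a,b]^d_+$-positive (it maps $C[a,b]^d_+$ into $C[a,b]^d_+$), and its operator norm satisfies $\|\Pi_n\|_{L(C[a,b]^d)} \le 2$. -/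
open MeasureTheory

/-!
Write `Πₙ u` as the telescoping sum `u(x₀) + ∑ᵢ q(θᵢ(t)) • (u(xᵢ₊₁) - u(xᵢ))`, where
`q(θ) = 3θ² - 2θ³` is extended by the constants `0` and `1` outside `[0, 1]`, and
`θᵢ(t) = (t - xᵢ) / hᵢ`.
Since `q'(0) = q'(1) = 0`, the clamped `q` is `C¹` on all of `ℝ`, so the spline is `C¹` with no
gluing at the nodes. On `[xᵢ, xᵢ₊₁]` the sum collapses to `(1 - q) • u(xᵢ) + q • u(xᵢ₊₁)` with
`q ∈ [0, 1]`, a convex combination of two values of `u`: this gives positivity with respect to any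
convex set and even `‖Πₙ‖ ≤ 1`.
-/

open Set

section IccExtend

variable {E : Type*} [NormedAddCommGroup E] [NormedSpace ℝ E]
  {a b : ℝ} (hab : a ≤ b) {f f' : ℝ → E}

theorem hasDerivAt_IccExtend (hf : ∀ y, HasDerivAt f (f' y) y) (ha : f' a = 0) (hb : f' b = 0)
    (θ : ℝ) :
    HasDerivAt (IccExtend hab ((Icc a b).domRestrict f))
      (IccExtend hab ((Icc a b).domRestrict f') θ) θ := by
  set g := IccExtend hab ((Icc a b).domRestrict f)
  set g' := IccExtend hab ((Icc a b).domRestrict f')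
  have piece : ∀ {s : Set ℝ} {φ φ' : ℝ → E}, IsClosed s → (∀ y, HasDerivAt φ (φ' y) y) →
      EqOn g φ s → EqOn g' φ' s → HasDerivWithinAt g (g' θ) s θ := by
    intro s φ φ' hs hφ hg hg'
    by_cases hθ : θ ∈ s
    · exact ((hφ θ).hasDerivWithinAt.congr hg (hg hθ)).congr_deriv (hg' hθ).symm
    · exact HasFDerivWithinAt.of_notMem_closure (hs.closure_eq.symm ▸ hθ)
  have left : HasDerivWithinAt g (g' θ) (Iic a) θ :=
    piece isClosed_Iic (fun y => hasDerivAt_const y (f a))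
      (fun y hy => IccExtend_of_le_left hab _ hy)
      (fun y hy => (IccExtend_of_le_left hab _ hy).trans ha)
  have middle : HasDerivWithinAt g (g' θ) (Icc a b) θ :=
    piece isClosed_Icc hf (fun y hy => IccExtend_of_mem hab _ hy)
      (fun y hy => IccExtend_of_mem hab _ hy)
  have right : HasDerivWithinAt g (g' θ) (Ici b) θ :=
    piece isClosed_Ici (fun y => hasDerivAt_const y (f b))
      (fun y hy => IccExtend_of_right_le hab _ hy)
      (fun y hy => (IccExtend_of_right_le hab _ hy).trans hb)
  have := (left.union middle).union right
  rwa [Iic_union_Icc_eq_Iic hab, Iic_union_Ici, hasDerivWithinAt_univ] at this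

theorem contDiff_one_IccExtend (hf : ∀ y, HasDerivAt f (f' y) y) (hf' : Continuous f')
    (ha : f' a = 0) (hb : f' b = 0) :
    ContDiff ℝ 1 (IccExtend hab ((Icc a b).domRestrict f)) := by
  have hderiv := hasDerivAt_IccExtend hab hf ha hb
  rw [contDiff_one_iff_deriv, funext fun θ => (hderiv θ).deriv]
  exact ⟨fun θ => (hderiv θ).differentiableAt, hf'.continuousOn.domRestrict.Icc_extend'⟩

end IccExtend

def smoothstep (θ : ℝ) : ℝ := 3 * θ ^ 2 - 2 * θ ^ 3

theorem hasDerivAt_smoothstep (θ : ℝ) : HasDerivAt smoothstep (6 * θ * (1 - θ)) θ := by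
  refine (((hasDerivAt_pow 2 θ).const_mul 3).sub ((hasDerivAt_pow 3 θ).const_mul 2)).congr_deriv ?_
  push_cast
  ring

theorem smoothstep_mem_Icc {θ : ℝ} (hθ : θ ∈ Icc (0 : ℝ) 1) : smoothstep θ ∈ Icc (0 : ℝ) 1 := by
  obtain ⟨h0, h1⟩ := hθ
  constructor <;> unfold smoothstep <;>
    nlinarith [mul_nonneg h0 h0, mul_nonneg (sub_nonneg.2 h1) (sub_nonneg.2 h1)]

noncomputable def clampedSmoothstep : ℝ → ℝ :=
  IccExtend zero_le_one ((Icc 0 1).domRestrict smoothstep)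

theorem contDiff_clampedSmoothstep : ContDiff ℝ 1 clampedSmoothstep :=
  contDiff_one_IccExtend zero_le_one hasDerivAt_smoothstep (by fun_prop) (by ring) (by ring)

theorem clampedSmoothstep_of_nonpos {θ : ℝ} (h : θ ≤ 0) : clampedSmoothstep θ = 0 := by
  simp [clampedSmoothstep, IccExtend_of_le_left _ _ h, smoothstep]

theorem clampedSmoothstep_of_one_le {θ : ℝ} (h : 1 ≤ θ) : clampedSmoothstep θ = 1 := by
  simp [clampedSmoothstep, IccExtend_of_right_le _ _ h, smoothstep]; norm_num

theorem clampedSmoothstep_of_mem {θ : ℝ} (h : θ ∈ Icc (0 : ℝ) 1) :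
    clampedSmoothstep θ = smoothstep θ :=
  IccExtend_of_mem _ _ h

theorem sub_div_sub_mem_Icc {a b t : ℝ} (hab : a < b) (ht : t ∈ Icc a b) :
    (t - a) / (b - a) ∈ Icc (0 : ℝ) 1 :=
  ⟨div_nonneg (sub_nonneg.2 ht.1) (sub_pos.2 hab).le,
    (div_le_one (sub_pos.2 hab)).2 (sub_le_sub_right ht.2 a)⟩

theorem exists_lt_mem_Icc_of_mem_Icc {α : Type*} [LinearOrder α] (X : ℕ → α) {t : α} :
    ∀ {n : ℕ}, 0 < n → t ∈ Icc (X 0) (X n) → ∃ k < n, t ∈ Icc (X k) (X (k + 1))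
  | 1, _, ht => ⟨0, one_pos, ht⟩
  | m + 2, _, ht => by
    by_cases h : t ≤ X (m + 1)
    · obtain ⟨k, hk, hkt⟩ := exists_lt_mem_Icc_of_mem_Icc X m.succ_pos ⟨ht.1, h⟩
      exact ⟨k, by omega, hkt⟩
    · exact ⟨m + 1, by omega, (not_le.1 h).le, ht.2⟩

section Spline

variable {E : Type*} [NormedAddCommGroup E] [NormedSpace ℝ E]

theorem Finset.sum_range_smul_sub_eq_of_step {φ : ℕ → ℝ} {U : ℕ → E} {k n : ℕ} (hk : k < n)
    (h_lt : ∀ i < k, φ i = 1) (h_gt : ∀ i, k < i → i < n → φ i = 0) :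
    ∑ i ∈ Finset.range n, φ i • (U (i + 1) - U i) = U k - U 0 + φ k • (U (k + 1) - U k) := by
  have h_tail : ∑ i ∈ Finset.Ico (k + 1) n, φ i • (U (i + 1) - U i) = 0 :=
    Finset.sum_eq_zero fun i hi => by
      rw [Finset.mem_Ico] at hi
      rw [h_gt i hi.1 hi.2, zero_smul]
  have h_head : ∑ i ∈ Finset.range k, φ i • (U (i + 1) - U i) = U k - U 0 := by
    rw [← Finset.sum_range_sub]
    exact Finset.sum_congr rfl fun i hi => by rw [h_lt i (Finset.mem_range.1 hi), one_smul]
  rw [← Finset.sum_range_add_sum_Ico _ hk, h_tail, add_zero, Finset.sum_range_succ, h_head]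

variable (X : ℕ → ℝ) (n : ℕ)

noncomputable def smoothstepSpline (U : ℕ → E) (t : ℝ) : E :=
  U 0 + ∑ i ∈ Finset.range n,
    clampedSmoothstep ((t - X i) / (X (i + 1) - X i)) • (U (i + 1) - U i)

theorem contDiff_smoothstepSpline (U : ℕ → E) :
    ContDiff ℝ 1 (smoothstepSpline X n U) :=
  contDiff_const.add <| ContDiff.sum fun _ _ =>
    (contDiff_clampedSmoothstep.comp ((contDiff_id.sub contDiff_const).div_const _)).smul
      contDiff_const

theorem smoothstepSpline_add (U V : ℕ → E) (t : ℝ) :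
    smoothstepSpline X n (U + V) t = smoothstepSpline X n U t + smoothstepSpline X n V t := by
  simp only [smoothstepSpline, Pi.add_apply, add_sub_add_comm, smul_add, Finset.sum_add_distrib]
  abel

theorem smoothstepSpline_smul (c : ℝ) (U : ℕ → E) (t : ℝ) :
    smoothstepSpline X n (c • U) t = c • smoothstepSpline X n U t := by
  simp only [smoothstepSpline, Pi.smul_apply, ← smul_sub, smul_comm _ c, ← Finset.smul_sum,
    smul_add]

noncomputable def smoothstepSplineOp {a b : ℝ} (hX : ∀ j, X j ∈ Icc a b) :
    C(Icc a b, E) →ₗ[ℝ] C(Icc a b, E) where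
  toFun u :=
    ⟨fun z => smoothstepSpline X n (fun j => u ⟨X j, hX j⟩) z,
      (contDiff_smoothstepSpline X n _).continuous.comp continuous_subtype_val⟩
  map_add' u v := ContinuousMap.ext fun z =>
    smoothstepSpline_add X n (fun j => u ⟨X j, hX j⟩) (fun j => v ⟨X j, hX j⟩) z
  map_smul' c u := ContinuousMap.ext fun z =>
    smoothstepSpline_smul X n c (fun j => u ⟨X j, hX j⟩) z

variable {X n}

theorem smoothstepSpline_eq_of_mem_Icc (hX : StrictMonoOn X (Iic n)) (U : ℕ → E) {k : ℕ}
    (hk : k < n) {t : ℝ} (ht : t ∈ Icc (X k) (X (k + 1))) :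
    smoothstepSpline X n U t =
      (1 - smoothstep ((t - X k) / (X (k + 1) - X k))) • U k
        + smoothstep ((t - X k) / (X (k + 1) - X k)) • U (k + 1) := by
  have hgap : ∀ i < n, 0 < X (i + 1) - X i := fun i hi =>
    sub_pos.2 (hX (mem_Iic.2 (by omega)) (mem_Iic.2 (by omega)) (by omega))
  have hle : ∀ i j, i ≤ j → j ≤ n → X i ≤ X j := fun i j hij hj =>
    hX.monotoneOn (mem_Iic.2 (by omega)) (mem_Iic.2 hj) hij
  rw [smoothstepSpline, Finset.sum_range_smul_sub_eq_of_step hk,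
    clampedSmoothstep_of_mem (sub_div_sub_mem_Icc (sub_pos.1 (hgap k hk)) ht)]
  · rw [sub_smul, one_smul, smul_sub]
    abel
  · intro i hi
    refine clampedSmoothstep_of_one_le ((one_le_div (hgap i (by omega))).2 ?_)
    linarith [hle (i + 1) k (by omega) hk.le, ht.1]
  · intro i hki hin
    refine clampedSmoothstep_of_nonpos (div_nonpos_of_nonpos_of_nonneg ?_ (hgap i hin).le)
    linarith [hle (k + 1) i (by omega) hin.le, ht.2]

theorem smoothstepSpline_mem_segment (hX : StrictMonoOn X (Iic n)) (hn : 0 < n) (U : ℕ → E)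
    {t : ℝ} (ht : t ∈ Icc (X 0) (X n)) :
    ∃ k < n, smoothstepSpline X n U t ∈ segment ℝ (U k) (U (k + 1)) := by
  obtain ⟨k, hk, htk⟩ := exists_lt_mem_Icc_of_mem_Icc X hn ht
  have hgap : X k < X (k + 1) := hX (mem_Iic.2 (by omega)) (mem_Iic.2 (by omega)) (by omega)
  obtain ⟨h0, h1⟩ := smoothstep_mem_Icc (sub_div_sub_mem_Icc hgap htk)
  exact ⟨k, hk, _, _, by linarith, h0, by ring, (smoothstepSpline_eq_of_mem_Icc hX U hk htk).symm⟩

variable {a b : ℝ}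

theorem smoothstepSplineOp_apply_mem (hX : ∀ j, X j ∈ Icc a b) (hXmono : StrictMonoOn X (Iic n))
    (hn : 0 < n) (hX0 : X 0 = a) (hXn : X n = b) {Y : Set E} (hY : Convex ℝ Y)
    {u : C(Icc a b, E)} (hu : ∀ z, u z ∈ Y) (z : Icc a b) : smoothstepSplineOp X n hX u z ∈ Y := by
  obtain ⟨k, -, hk⟩ := smoothstepSpline_mem_segment hXmono hn (fun j => u ⟨X j, hX j⟩)
    (t := z) (by rw [hX0, hXn]; exact z.2)
  exact hY.segment_subset (hu ⟨X k, hX k⟩) (hu ⟨X (k + 1), hX (k + 1)⟩) hk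

theorem norm_smoothstepSplineOp_apply_le (hX : ∀ j, X j ∈ Icc a b)
    (hXmono : StrictMonoOn X (Iic n)) (hn : 0 < n) (hX0 : X 0 = a) (hXn : X n = b)
    (u : C(Icc a b, E)) :
    ‖smoothstepSplineOp X n hX u‖ ≤ ‖u‖ := by
  rw [ContinuousMap.norm_le _ (norm_nonneg u)]
  intro z
  simpa using smoothstepSplineOp_apply_mem hX hXmono hn hX0 hXn (convex_closedBall 0 ‖u‖)
    (fun z => mem_closedBall_zero_iff.2 (u.norm_coe_le_norm z)) z

end Spline

theorem stmt16_general {d n : ℕ} (hn : 0 < n) (a b : ℝ)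
    (Y : Set (Fin d → ℝ)) (hY : IsOrderCone Y)
    (x : Fin (n + 1) → ℝ) (hmono : StrictMono x)
    (hxa : x 0 = a) (hxb : x (Fin.last n) = b)
    (hxmem : ∀ i, x i ∈ Set.Icc a b)
    (hmem : ∀ (i : Fin n) (t : ℝ),
      t ∈ Set.Icc (x i.castSucc) (x i.succ) → t ∈ Set.Icc a b) :
    ∃ T : C(Set.Icc a b, Fin d → ℝ) →L[ℝ] C(Set.Icc a b, Fin d → ℝ),
      (∀ (u : C(Set.Icc a b, Fin d → ℝ)) (i : Fin n) (t : ℝ)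
          (ht : t ∈ Set.Icc (x i.castSucc) (x i.succ)),
        T u ⟨t, hmem i t ht⟩ =
          (1 - 3 * ((t - x i.castSucc) / (x i.succ - x i.castSucc)) ^ 2
             + 2 * ((t - x i.castSucc) / (x i.succ - x i.castSucc)) ^ 3) •
            u ⟨x i.castSucc, hxmem i.castSucc⟩
          + (3 * ((t - x i.castSucc) / (x i.succ - x i.castSucc)) ^ 2
             - 2 * ((t - x i.castSucc) / (x i.succ - x i.castSucc)) ^ 3) •
            u ⟨x i.succ, hxmem i.succ⟩) ∧
      (∀ u : C(Set.Icc a b, Fin d → ℝ), ∃ g : ℝ → (Fin d → ℝ),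
        ContDiffOn ℝ 1 g (Set.Icc a b) ∧ ∀ z : Set.Icc a b, T u z = g z) ∧
      (∀ u : C(Set.Icc a b, Fin d → ℝ), (∀ z, u z ∈ Y) → ∀ z, T u z ∈ Y) ∧
      ‖T‖ ≤ 2 := by
  set X : ℕ → ℝ := fun j => x (Fin.clamp j n)
  have hclamp : ∀ {j : ℕ}, j ≤ n → (Fin.clamp j n : ℕ) = j := fun hj => min_eq_left hj
  have hX : StrictMonoOn X (Iic n) := fun i hi j hj hij =>
    hmono (by rw [Fin.lt_def, hclamp hi, hclamp hj]; exact hij)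
  have hX0 : X 0 = a := hxa
  have hXn : X n = b := by rw [← hxb]; exact congrArg x (Fin.ext (hclamp le_rfl))
  have hbound : ∀ u : C(Set.Icc a b, Fin d → ℝ),
      ‖smoothstepSplineOp X n (fun j => hxmem _) u‖ ≤ 1 * ‖u‖ := fun u =>
    (one_mul ‖u‖).symm ▸ norm_smoothstepSplineOp_apply_le _ hX hn hX0 hXn u
  refine ⟨(smoothstepSplineOp X n fun j => hxmem _).mkContinuous 1 hbound, ?_,
    fun u => ⟨_, (contDiff_smoothstepSpline X n fun j => u ⟨X j, hxmem _⟩).contDiffOn,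
      fun z => rfl⟩,
    fun u hu => smoothstepSplineOp_apply_mem _ hX hn hX0 hXn hY.2.2.1 hu,
    (LinearMap.mkContinuous_norm_le _ zero_le_one hbound).trans one_le_two⟩
  intro u i t ht
  have h₁ : Fin.clamp i n = i.castSucc := Fin.ext (hclamp i.2.le)
  have h₂ : Fin.clamp (i + 1) n = i.succ := Fin.ext (hclamp i.2)
  have hformula := smoothstepSpline_eq_of_mem_Icc hX (fun j => u ⟨X j, hxmem _⟩) i.2 (t := t)
    (by simpa only [X, h₁, h₂] using ht)
  simp only [X, h₁, h₂, smoothstep, ← sub_add] at hformula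
  exact hformula

/-- The piecewise cubic interpolation
`(Πₙ u)(t) = (1 - 3θ² + 2θ³) u(xᵢ) + (3θ² - 2θ³) u(xᵢ₊₁)`, `θ = (t - xᵢ)/hᵢ`,
on a grid `a = x₀ < … < xₙ = b` defines a bounded linear operator on `C[a,b]^d`
(with `ℝ^d` carrying the maximum norm) whose values are `C¹` cubic splines,
which is `C[a,b]^d₊`-positive and has operator norm at most `2`. -/
theorem stmt16 {d n : ℕ} (hn : 0 < n) (a b : ℝ) (hab : a < b)
    (Y : Set (Fin d → ℝ)) (hY : IsOrderCone Y)
    (x : Fin (n + 1) → ℝ) (hmono : StrictMono x)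
    (hxa : x 0 = a) (hxb : x (Fin.last n) = b)
    (hxmem : ∀ i, x i ∈ Set.Icc a b)
    (hmem : ∀ (i : Fin n) (t : ℝ),
      t ∈ Set.Icc (x i.castSucc) (x i.succ) → t ∈ Set.Icc a b) :
    ∃ T : C(Set.Icc a b, Fin d → ℝ) →L[ℝ] C(Set.Icc a b, Fin d → ℝ),
      (∀ (u : C(Set.Icc a b, Fin d → ℝ)) (i : Fin n) (t : ℝ)
          (ht : t ∈ Set.Icc (x i.castSucc) (x i.succ)),
        T u ⟨t, hmem i t ht⟩ =
          (1 - 3 * ((t - x i.castSucc) / (x i.succ - x i.castSucc)) ^ 2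
             + 2 * ((t - x i.castSucc) / (x i.succ - x i.castSucc)) ^ 3) •
            u ⟨x i.castSucc, hxmem i.castSucc⟩
          + (3 * ((t - x i.castSucc) / (x i.succ - x i.castSucc)) ^ 2
             - 2 * ((t - x i.castSucc) / (x i.succ - x i.castSucc)) ^ 3) •
            u ⟨x i.succ, hxmem i.succ⟩) ∧
      (∀ u : C(Set.Icc a b, Fin d → ℝ), ∃ g : ℝ → (Fin d → ℝ),
        ContDiffOn ℝ 1 g (Set.Icc a b) ∧ ∀ z : Set.Icc a b, T u z = g z) ∧
      (∀ u : C(Set.Icc a b, Fin d → ℝ), (∀ z, u z ∈ Y) → ∀ z, T u z ∈ Y) ∧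
      ‖T‖ ≤ 2 :=
  stmt16_general hn a b Y hY x hmono hxa hxb hxmem hmem
end
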